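/- Let f ∈ L²(ℝ; ℂ) be compactly supported and not almost everywhere zero. Then there exists k ≥ 0 such that for every j < k the function Tʲf is integrable with ∫_ℝ Tʲf(x) dx = 0, while Tᵏf is integrable and ∫_ℝ Tᵏf(x) dx ≠ 0. -/

import Mathlib

/-!
If every iterate `Tʲg` is integrable with integral zero, then all moments of `g` vanish. Indeed, if
`g` vanishes outside `[a, b]` and `∫ g = 0`, then `Tg` is continuous and also vanishes outside
`[a, b]`, and Fubini on the triangle `t ≤ x` gives `∫ xⁿ Tg(x) dx = -(n+1)⁻¹ ∫ tⁿ⁺¹ g(t) dt`;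
induction on `n` does the rest. By Weierstrass approximation `g` then integrates to zero against
every continuous function on `[a, b]`, so `g = 0` a.e. Hence for `f ≠ 0` some iterate fails, and the
first one that fails is still integrable, because all earlier ones have integral zero.
-/

open MeasureTheory

/-- The antiderivative operator `Tf(x) = ∫_{-∞}^x f(t) dt`. -/
noncomputable def T (f : ℝ → ℂ) : ℝ → ℂ := fun x => ∫ t in Set.Iic x, f t

/-- A function vanishes almost everywhere outside some compact set. -/
def AECompactlySupported (f : ℝ → ℂ) : Prop :=
  ∃ K : Set ℝ, IsCompact K ∧ ∀ᵐ x ∂(volume), x ∉ K → f x = 0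

open Set

variable {g : ℝ → ℂ} {a b : ℝ}

theorem continuous_T (hg : Integrable g) : Continuous (T g) := by
  have h : T g = fun x => (∫ t in Iic 0, g t) + ∫ t in (0 : ℝ)..x, g t := by
    funext x
    rw [← intervalIntegral.integral_Iic_sub_Iic hg.integrableOn hg.integrableOn,
      add_sub_cancel]
    rfl
  rw [h]
  exact continuous_const.add
    (intervalIntegral.continuous_primitive (fun _ _ => hg.intervalIntegrable) 0)

theorem T_eq_zero_of_notMem_Icc (hsupp : ∀ᵐ t, t ∉ Icc a b → g t = 0)
    (h0 : ∫ t, g t = 0) {x : ℝ} (hx : x ∉ Icc a b) : T g x = 0 := by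
  rcases not_and_or.1 hx with hxa | hxb
  · refine integral_eq_zero_of_ae ?_
    filter_upwards [ae_restrict_of_ae hsupp, ae_restrict_mem measurableSet_Iic] with t ht htx
    exact ht fun h => hxa (h.1.trans htx)
  · rw [← h0]
    refine setIntegral_eq_integral_of_ae_compl_eq_zero ?_
    filter_upwards [hsupp] with t ht htx
    exact ht fun h => htx (h.2.trans (not_le.1 hxb).le)

theorem integrable_T (hg : Integrable g) (hsupp : ∀ᵐ t, t ∉ Icc a b → g t = 0)
    (h0 : ∫ t, g t = 0) : Integrable (T g) :=
  (continuous_T hg).integrable_of_hasCompactSupport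
    (HasCompactSupport.intro isCompact_Icc fun _ => T_eq_zero_of_notMem_Icc hsupp h0)

theorem integrable_iterate_T (hg : Integrable g) (hsupp : ∀ᵐ t, t ∉ Icc a b → g t = 0) {k : ℕ}
    (h0 : ∀ j < k, ∫ t, T^[j] g t = 0) :
    Integrable (T^[k] g) ∧ ∀ᵐ t, t ∉ Icc a b → T^[k] g t = 0 := by
  induction k with
  | zero => exact ⟨hg, hsupp⟩
  | succ k ih =>
    obtain ⟨hint, hsupp'⟩ := ih fun j hj => h0 j (hj.trans k.lt_succ_self)
    rw [Function.iterate_succ_apply']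
    exact ⟨integrable_T hint hsupp' (h0 k k.lt_succ_self),
      .of_forall fun _ => T_eq_zero_of_notMem_Icc hsupp' (h0 k k.lt_succ_self)⟩

theorem integrable_continuous_mul_of_ae_notMem_Icc (hg : Integrable g)
    (hsupp : ∀ᵐ t, t ∉ Icc a b → g t = 0) {φ : ℝ → ℂ} (hφ : Continuous φ) :
    Integrable fun t => φ t * g t := by
  refine IntegrableOn.integrable_of_ae_notMem_eq_zero (s := Icc a b)
    (hg.integrableOn.continuousOn_mul hφ.continuousOn isCompact_Icc) ?_
  filter_upwards [hsupp] with t ht htab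
  rw [ht htab, mul_zero]

theorem integral_mul_T (hg : Integrable g) (hsupp : ∀ᵐ t, t ∉ Icc a b → g t = 0)
    (h0 : ∫ t, g t = 0) {p P : ℝ → ℂ} (hp : Continuous p) (hP : ∀ x, HasDerivAt P (p x) x) :
    ∫ x, p x * T g x = -∫ t, P t * g t := by
  have hPc : Continuous P := continuous_iff_continuousAt.2 fun x => (hP x).continuousAt
  set μ := volume.restrict (Icc a b)
  let F : ℝ → ℝ → ℂ := fun x t => p x * (Iic x).indicator g t
  have hF : Integrable (Function.uncurry F) (μ.prod volume) := by
    obtain ⟨C, hC⟩ :=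
      (isCompact_Icc (a := a) (b := b)).exists_bound_of_continuousOn hp.continuousOn
    have hmeas : AEStronglyMeasurable (Function.uncurry F) (μ.prod volume) := by
      have : Function.uncurry F = fun q : ℝ × ℝ =>
          p q.1 * {q : ℝ × ℝ | q.2 ≤ q.1}.indicator (fun q => g q.2) q := by
        funext ⟨x, t⟩
        by_cases h : t ≤ x <;> simp [F, h]
      rw [this]
      exact (hp.comp continuous_fst).aestronglyMeasurable.mul
        (hg.aestronglyMeasurable.comp_snd.indicator
          (measurableSet_le measurable_snd measurable_fst))
    refine ((integrable_const C).mul_prod hg.norm).mono' hmeas ?_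
    filter_upwards [Measure.quasiMeasurePreserving_fst.ae (ae_restrict_mem measurableSet_Icc)]
      with q hq
    rw [Function.uncurry_apply_pair, norm_mul]
    exact mul_le_mul (hC _ hq) (norm_indicator_le_norm_self _ _) (norm_nonneg _)
      ((norm_nonneg _).trans (hC _ hq))
  have hinner : ∀ᵐ t, ∫ x, F x t ∂μ = (P b - P t) * g t := by
    filter_upwards [hsupp] with t ht
    by_cases htab : t ∈ Icc a b
    · have hslice : ∀ x, F x t = (Ici t).indicator (fun x => p x * g t) x := fun x => by
        by_cases h : t ≤ x <;> simp [F, h]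
      have hslab : Icc a b ∩ Ici t = Icc t b := by
        ext x
        simp only [mem_inter_iff, mem_Icc, mem_Ici]
        constructor
        · exact fun ⟨⟨_, hxb⟩, htx⟩ => ⟨htx, hxb⟩
        · exact fun ⟨htx, hxb⟩ => ⟨⟨htab.1.trans htx, hxb⟩, htx⟩
      rw [integral_congr_ae (.of_forall hslice), setIntegral_indicator measurableSet_Ici, hslab,
        integral_mul_const, integral_Icc_eq_integral_Ioc,
        ← intervalIntegral.integral_of_le htab.2,
        intervalIntegral.integral_eq_sub_of_hasDerivAt (fun x _ => hP x)
          (hp.intervalIntegrable _ _)]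
    · simp [F, indicator_apply, ht htab]
  calc ∫ x, p x * T g x = ∫ x, ∫ t, F x t ∂volume ∂μ := by
        rw [← setIntegral_eq_integral_of_forall_compl_eq_zero fun x hx => by
          rw [T_eq_zero_of_notMem_Icc hsupp h0 hx, mul_zero]]
        refine setIntegral_congr_fun measurableSet_Icc fun x _ => ?_
        simp only [F, T, integral_const_mul, integral_indicator measurableSet_Iic]
    _ = ∫ t, ∫ x, F x t ∂μ := integral_integral_swap hF
    _ = ∫ t, (P b * g t - P t * g t) :=
        integral_congr_ae (hinner.mono fun t ht => by simp only [ht, sub_mul])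
    _ = -∫ t, P t * g t := by
        rw [integral_sub (hg.const_mul _) (integrable_continuous_mul_of_ae_notMem_Icc hg hsupp hPc),
          integral_const_mul, h0, mul_zero, zero_sub]

theorem integral_pow_mul_T (hg : Integrable g) (hsupp : ∀ᵐ t, t ∉ Icc a b → g t = 0)
    (h0 : ∫ t, g t = 0) (n : ℕ) :
    ∫ x : ℝ, (x : ℂ) ^ n * T g x = -((n + 1 : ℂ)⁻¹ * ∫ t : ℝ, (t : ℂ) ^ (n + 1) * g t) := by
  have hP : ∀ x : ℝ,
      HasDerivAt (fun t : ℝ => (n + 1 : ℂ)⁻¹ * (t : ℂ) ^ (n + 1)) ((x : ℂ) ^ n) x :=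
    fun x => (((hasDerivAt_pow (n + 1) (x : ℂ)).const_mul _).comp_ofReal).congr_deriv (by
      push_cast
      field_simp)
  rw [integral_mul_T (p := fun x : ℝ => (x : ℂ) ^ n) hg hsupp h0 (by fun_prop) hP,
    ← integral_const_mul]
  simp only [mul_assoc]

theorem integral_pow_mul_eq_zero_of_iterate_T (hsupp : ∀ᵐ t, t ∉ Icc a b → g t = 0)
    (h : ∀ j, Integrable (T^[j] g) ∧ ∫ t, T^[j] g t = 0) (n : ℕ) :
    ∫ t : ℝ, (t : ℂ) ^ n * g t = 0 := by
  induction n generalizing g with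
  | zero => simpa using (h 0).2
  | succ n ih =>
    obtain ⟨hg, h0⟩ : Integrable g volume ∧ ∫ t, g t = 0 := h 0
    have hT : ∫ x : ℝ, (x : ℂ) ^ n * T g x = 0 :=
      ih (.of_forall fun _ => T_eq_zero_of_notMem_Icc hsupp h0)
        fun j => by simpa only [Function.iterate_succ_apply] using h (j + 1)
    rw [integral_pow_mul_T hg hsupp h0, neg_eq_zero, mul_eq_zero] at hT
    exact hT.resolve_left (inv_ne_zero (Nat.cast_add_one_ne_zero n))

theorem integral_polynomial_mul_eq_zero (hg : Integrable g)
    (hsupp : ∀ᵐ t, t ∉ Icc a b → g t = 0)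
    (hm : ∀ n : ℕ, ∫ t : ℝ, (t : ℂ) ^ n * g t = 0) (q : Polynomial ℝ) :
    ∫ t : ℝ, ((q.eval t : ℝ) : ℂ) * g t = 0 := by
  induction q using Polynomial.induction_on' with
  | add q r hq hr =>
    simp only [Polynomial.eval_add, Complex.ofReal_add, add_mul]
    rw [integral_add (integrable_continuous_mul_of_ae_notMem_Icc hg hsupp (by fun_prop))
      (integrable_continuous_mul_of_ae_notMem_Icc hg hsupp (by fun_prop)), hq, hr, add_zero]
  | monomial n c =>
    simp only [Polynomial.eval_monomial, Complex.ofReal_mul, Complex.ofReal_pow, mul_assoc,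
      integral_const_mul, hm, mul_zero]

theorem norm_integral_mul_le_of_forall_mem_Icc (hg : Integrable g)
    (hsupp : ∀ᵐ t, t ∉ Icc a b → g t = 0)
    {ψ : ℝ → ℂ} {ε : ℝ} (hψ : ∀ t ∈ Icc a b, ‖ψ t‖ ≤ ε) :
    ‖∫ t, ψ t * g t‖ ≤ ε * ∫ t, ‖g t‖ := by
  rw [← integral_const_mul]
  refine norm_integral_le_of_norm_le (hg.norm.const_mul ε) ?_
  filter_upwards [hsupp] with t ht
  by_cases htab : t ∈ Icc a b
  · rw [norm_mul]
    exact mul_le_mul_of_nonneg_right (hψ t htab) (norm_nonneg _)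
  · simp [ht htab]

theorem ae_eq_zero_of_integral_pow_mul_eq_zero (hg : Integrable g)
    (hsupp : ∀ᵐ t, t ∉ Icc a b → g t = 0) (hm : ∀ n : ℕ, ∫ t : ℝ, (t : ℂ) ^ n * g t = 0) :
    g =ᵐ[volume] 0 := by
  refine ae_eq_zero_of_integral_contDiff_smul_eq_zero hg.locallyIntegrable fun φ hφ _ => ?_
  simp only [Complex.real_smul]
  refine norm_le_zero_iff.1 (le_of_forall_pos_le_add fun δ hδ => ?_)
  set C := ∫ t, ‖g t‖
  have hC : 0 ≤ C := integral_nonneg fun _ => norm_nonneg _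
  obtain ⟨q, hq⟩ := exists_polynomial_near_of_continuousOn a b φ hφ.continuous.continuousOn
    (δ / (C + 1)) (by positivity)
  have hdiff : ∫ t, (φ t : ℂ) * g t = ∫ t, ((φ t - q.eval t : ℝ) : ℂ) * g t := by
    simp only [Complex.ofReal_sub, sub_mul]
    rw [integral_sub (integrable_continuous_mul_of_ae_notMem_Icc hg hsupp (by fun_prop))
      (integrable_continuous_mul_of_ae_notMem_Icc hg hsupp (by fun_prop)),
      integral_polynomial_mul_eq_zero hg hsupp hm, sub_zero]
  calc ‖∫ t, (φ t : ℂ) * g t‖ ≤ δ / (C + 1) * C := by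
        rw [hdiff]
        refine norm_integral_mul_le_of_forall_mem_Icc hg hsupp fun t ht => ?_
        rw [Complex.norm_real, Real.norm_eq_abs, abs_sub_comm]
        exact (hq t ht).le
    _ ≤ 0 + δ := by
        rw [zero_add, div_mul_eq_mul_div, div_le_iff₀ (by positivity)]
        nlinarith

theorem AECompactlySupported.exists_ae_notMem_Icc {f : ℝ → ℂ} (hf : AECompactlySupported f) :
    ∃ a b : ℝ, ∀ᵐ t, t ∉ Icc a b → f t = 0 := by
  obtain ⟨K, hK, hKf⟩ := hf
  refine ⟨sInf K, sSup K, hKf.mono fun t ht htK => ht fun htK' => htK ?_⟩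
  exact subset_Icc_csInf_csSup hK.bddBelow hK.bddAbove htK'

theorem AECompactlySupported.integrable {f : ℝ → ℂ} (hfc : AECompactlySupported f)
    {p : ENNReal} (hf : MemLp f p volume) (hp : 1 ≤ p) : Integrable f := by
  obtain ⟨K, hK, hKf⟩ := hfc
  exact ((hf.locallyIntegrable hp).integrableOn_isCompact hK).integrable_of_ae_notMem_eq_zero hKf

/-- If `f ∈ L²(ℝ)` is compactly supported and not a.e. zero, then there is a `k ≥ 0`
such that `Tʲf` is integrable with zero integral for all `j < k`, while `Tᵏf` is
integrable with nonzero integral. -/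
theorem exists_iterate_integral_ne_zero
    (f : ℝ → ℂ) (hf : MemLp f 2 volume)
    (hfc : AECompactlySupported f) (hf0 : ¬ f =ᵐ[volume] 0) :
    ∃ k : ℕ, (∀ j < k, Integrable (T^[j] f) ∧ ∫ x, T^[j] f x = 0) ∧
      Integrable (T^[k] f) ∧ ∫ x, T^[k] f x ≠ 0 := by
  classical
  obtain ⟨a, b, hsupp⟩ := hfc.exists_ae_notMem_Icc
  have hint : Integrable f := hfc.integrable hf one_le_two
  have hex : ∃ k, ¬ (Integrable (T^[k] f) ∧ ∫ x, T^[k] f x = 0) := by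
    by_contra! hall
    exact hf0 (ae_eq_zero_of_integral_pow_mul_eq_zero hint hsupp
      (integral_pow_mul_eq_zero_of_iterate_T hsupp hall))
  have hbelow : ∀ j < Nat.find hex, Integrable (T^[j] f) ∧ ∫ x, T^[j] f x = 0 :=
    fun j hj => not_not.1 (Nat.find_min hex hj)
  have hk : Integrable (T^[Nat.find hex] f) :=
    (integrable_iterate_T hint hsupp fun j hj => (hbelow j hj).2).1
  exact ⟨Nat.find hex, hbelow, hk, fun h => Nat.find_spec hex ⟨hk, h⟩⟩
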